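/- arXiv:1810.04439 — 8 statements merged into one kernel-verified Lean document; each statement's English description precedes it below -/
import Mathlib

section
/- Let A be a nonsingular 4×4 (−1,1)-matrix. Then |per A| ≤ 8 = per D_{(4,4)}; if |per A| = 8 then A can be obtained from D_{(4,4)} by standard transformations; and if |per A| < 8 then |per A| ≤ 4 = per D_{(4,3)}. -/
open Matrix

/-- The permanent of a square matrix. -/
def per {n : ℕ} (A : Matrix (Fin n) (Fin n) ℚ) : ℚ :=
  ∑ σ : Equiv.Perm (Fin n), ∏ i, A i (σ i)

/-- The square matrix `D_{(n,l)}`: `-1` on the first `l` diagonal entries, `1` elsewhere. -/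
def Dmat (n l : ℕ) : Matrix (Fin n) (Fin n) ℚ :=
  fun i j => if (i : ℕ) = (j : ℕ) ∧ (j : ℕ) < l then -1 else 1

/-- `A` is obtained from `B` by standard transformations: a finite composition of row
permutations, column permutations, multiplications of rows/columns by `-1`, and
transposition (square case). -/
def StdEquiv {n : ℕ} (A B : Matrix (Fin n) (Fin n) ℚ) : Prop :=
  ∃ (ρ σ : Equiv.Perm (Fin n)) (ε δ : Fin n → ℚ),
    (∀ i, ε i = 1 ∨ ε i = -1) ∧ (∀ j, δ j = 1 ∨ δ j = -1) ∧
    ((∀ i j, A i j = ε i * δ j * B (ρ i) (σ j)) ∨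
     (∀ i j, A i j = ε i * δ j * B (σ j) (ρ i)))

/-!
Multiplying rows and columns by signs changes the permanent only by a sign and keeps the matrix
nonsingular, so `A` may be assumed to have a first row and a first column of ones. For order 4 this
leaves the `2 ^ 9` sign patterns of the remaining `3 × 3` block, which are checked exhaustively:
a nonsingular one has `|per| ≤ 4` unless the block is `2P - J` for a permutation matrix `P`, and
then `|per| = 8` and the matrix is `D_{(4,4)}` with permuted rows and rescaled rows and columns.
-/

open Equiv

section Signs

variable {R : Type*} [Ring R]

def IsSign (x : R) : Prop := x = 1 ∨ x = -1

theorem IsSign.mul {x y : R} (hx : IsSign x) (hy : IsSign y) : IsSign (x * y) := by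
  rcases hx with rfl | rfl <;> rcases hy with rfl | rfl <;> simp [IsSign]

theorem IsSign.neg {x : R} (hx : IsSign x) : IsSign (-x) := by
  rcases hx with rfl | rfl <;> simp [IsSign]

theorem IsSign.mul_self {x : R} (hx : IsSign x) : x * x = 1 := by
  rcases hx with rfl | rfl <;> simp

theorem IsSign.abs_eq_one [LinearOrder R] [IsOrderedRing R] {x : R} (hx : IsSign x) :
    |x| = 1 := by
  rcases hx with rfl | rfl <;> simp

def signOf : Bool → ℤ
  | true => 1
  | false => -1

theorem exists_signOf_eq {x : R} (hx : IsSign x) : ∃ b, (signOf b : R) = x := by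
  rcases hx with rfl | rfl
  exacts [⟨true, by simp [signOf]⟩, ⟨false, by simp [signOf]⟩]

end Signs

theorem isSign_prod {R : Type*} [CommRing R] {ι : Type*} (s : Finset ι) {v : ι → R}
    (hv : ∀ i ∈ s, IsSign (v i)) : IsSign (∏ i ∈ s, v i) :=
  Finset.prod_induction v IsSign (fun _ _ => IsSign.mul) (Or.inl rfl) hv

namespace Matrix

section Permanent

variable {R : Type*} [CommSemiring R]

theorem permanent_diagonal_mul_mul_diagonal {n : Type*} [DecidableEq n] [Fintype n]
    (e d : n → R) (M : Matrix n n R) :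
    (diagonal e * M * diagonal d).permanent = (∏ i, e i) * (∏ j, d j) * M.permanent := by
  simp only [permanent, diagonal_mul, mul_diagonal, Finset.mul_sum]
  refine Finset.sum_congr rfl fun σ _ => ?_
  rw [Finset.prod_mul_distrib, Finset.prod_mul_distrib, Equiv.prod_comp σ e]
  ring

theorem _root_.RingHom.map_permanent {S : Type*} [CommSemiring S] {n : Type*} [DecidableEq n]
    [Fintype n] (f : R →+* S) (M : Matrix n n R) :
    f M.permanent = (f.mapMatrix M).permanent := by
  simp [permanent, map_sum, map_prod]

theorem permanent_succ_column_zero {n : ℕ} (M : Matrix (Fin (n + 1)) (Fin (n + 1)) R) :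
    M.permanent = ∑ p, M p 0 * (M.submatrix (Equiv.swap 0 p ∘ Fin.succ) Fin.succ).permanent := by
  rw [permanent, Finset.univ_perm_fin_succ, ← Finset.univ_product_univ, Finset.sum_map,
    Finset.sum_product]
  refine Finset.sum_congr rfl fun p _ => ?_
  simp [permanent, Finset.mul_sum, Fin.prod_univ_succ]

end Permanent

-- Laplace expansions along the first column, in a form the kernel can evaluate.
def permanentRec {R : Type*} [CommSemiring R] : {n : ℕ} → Matrix (Fin n) (Fin n) R → R
  | 0, _ => 1
  | _ + 1, M => ∑ p, M p 0 * permanentRec (M.submatrix (Equiv.swap 0 p ∘ Fin.succ) Fin.succ)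

def detRec {R : Type*} [CommRing R] : {n : ℕ} → Matrix (Fin n) (Fin n) R → R
  | 0, _ => 1
  | _ + 1, M => ∑ i : Fin _, (-1) ^ (i : ℕ) * M i 0 * detRec (M.submatrix i.succAbove Fin.succ)

theorem permanent_eq_permanentRec {R : Type*} [CommSemiring R] :
    ∀ {n : ℕ} (M : Matrix (Fin n) (Fin n) R), M.permanent = M.permanentRec
  | 0, _ => permanent_isEmpty
  | _ + 1, M => by
    rw [permanent_succ_column_zero, permanentRec]
    simp only [permanent_eq_permanentRec]

theorem det_eq_detRec {R : Type*} [CommRing R] :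
    ∀ {n : ℕ} (M : Matrix (Fin n) (Fin n) R), M.det = M.detRec
  | 0, _ => det_fin_zero
  | _ + 1, M => by
    rw [det_succ_column_zero, detRec]
    simp only [det_eq_detRec]

section Bordered

variable {R : Type*} {n : ℕ}

def bordered [One R] (C : Matrix (Fin n) (Fin n) R) : Matrix (Fin (n + 1)) (Fin (n + 1)) R :=
  Fin.cons (fun _ => 1) fun a => Fin.cons 1 (C a)

@[simp]
theorem bordered_zero [One R] (C : Matrix (Fin n) (Fin n) R) (j : Fin (n + 1)) :
    bordered C 0 j = 1 := rfl

@[simp]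
theorem bordered_succ_zero [One R] (C : Matrix (Fin n) (Fin n) R) (a : Fin n) :
    bordered C a.succ 0 = 1 := rfl

@[simp]
theorem bordered_succ_succ [One R] (C : Matrix (Fin n) (Fin n) R) (a b : Fin n) :
    bordered C a.succ b.succ = C a b := rfl

theorem _root_.RingHom.mapMatrix_bordered {S : Type*} [Semiring R] [Semiring S] (f : R →+* S)
    (C : Matrix (Fin n) (Fin n) R) : f.mapMatrix (bordered C) = bordered (f.mapMatrix C) := by
  ext i j
  cases i using Fin.cases <;> cases j using Fin.cases <;> simp

theorem exists_eq_diagonal_mul_bordered_mul_diagonal [CommRing R]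
    (A : Matrix (Fin (n + 1)) (Fin (n + 1)) R) (hA : ∀ i j, IsSign (A i j)) :
    ∃ (e d : Fin (n + 1) → R) (C : Matrix (Fin n) (Fin n) R),
      (∀ i, IsSign (e i)) ∧ (∀ j, IsSign (d j)) ∧ (∀ a b, IsSign (C a b)) ∧
      A = diagonal e * bordered C * diagonal d := by
  have hsq i j : A i j * A i j = 1 := (hA i j).mul_self
  refine ⟨fun i => A i 0, fun j => A 0 0 * A 0 j,
    of fun a b => A 0 0 * A a.succ 0 * A 0 b.succ * A a.succ b.succ,
    fun i => hA i 0, fun j => (hA 0 0).mul (hA 0 j),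
    fun a b => (((hA 0 0).mul (hA a.succ 0)).mul (hA 0 b.succ)).mul (hA _ _), ?_⟩
  ext i j
  cases i using Fin.cases <;> cases j using Fin.cases <;>
    simp only [diagonal_mul, mul_diagonal, bordered_zero, bordered_succ_zero, bordered_succ_succ,
      of_apply]
  case zero.zero => linear_combination -A 0 0 * hsq 0 0
  case zero.succ b => linear_combination -A 0 b.succ * hsq 0 0
  case succ.zero a => linear_combination -A a.succ 0 * hsq 0 0
  case succ.succ a b =>
    linear_combination -A a.succ b.succ * (hsq 0 0 + A 0 0 ^ 2 * hsq a.succ 0 +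
      A 0 0 ^ 2 * A a.succ 0 ^ 2 * hsq 0 b.succ)

end Bordered

end Matrix

theorem per_eq_permanent {n : ℕ} (A : Matrix (Fin n) (Fin n) ℚ) : per A = A.permanent := by
  rw [← permanent_transpose]
  rfl

theorem Dmat_self (n : ℕ) : Dmat n n = of fun i j => if i = j then -1 else 1 := by
  ext i j
  simp [Dmat, Fin.val_eq_val, j.is_lt]

theorem stdEquiv_Dmat_of_bordered_perm {n : ℕ} (τ : Perm (Fin n)) (e d : Fin (n + 1) → ℚ)
    (he : ∀ i, IsSign (e i)) (hd : ∀ j, IsSign (d j)) :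
    StdEquiv (diagonal e * bordered (of fun a b => if τ a = b then 1 else -1) * diagonal d)
      (Dmat (n + 1) (n + 1)) := by
  -- Negating the first row and all columns but the first turns `D_{(n+1,n+1)}`, with its rows
  -- permuted by `τ` on `1, …, n`, into the bordered pattern of `τ`.
  set s : Fin (n + 1) → ℚ := Fin.cons (-1) fun _ => 1
  have hs i : IsSign (s i) := by
    cases i using Fin.cases <;> simp [s, IsSign]
  refine ⟨Perm.decomposeFin.symm (0, τ), 1, fun i => e i * s i, fun j => -(d j * s j),
    fun i => (he i).mul (hs i), fun j => ((hd j).mul (hs j)).neg, Or.inl fun i j => ?_⟩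
  cases i using Fin.cases <;> cases j using Fin.cases <;>
    simp [Dmat_self, s, diagonal_mul, mul_diagonal, (Fin.succ_ne_zero _).symm]

set_option maxRecDepth 100000 in
theorem natAbs_permanentRec_le_four_or_eq_eight_of_perm :
    ∀ g : Fin 3 → Fin 3 → Bool,
      (bordered (of fun a b => signOf (g a b))).detRec ≠ 0 →
        (bordered (of fun a b => signOf (g a b))).permanentRec.natAbs ≤ 4 ∨
        (bordered (of fun a b => signOf (g a b))).permanentRec.natAbs = 8 ∧
          ∃ τ : Perm (Fin 3), ∀ a b, g a b = decide (τ a = b) := by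
  decide +kernel

theorem abs_per_le_four_or_eq_eight_and_stdEquiv (A : Matrix (Fin 4) (Fin 4) ℚ)
    (hA : ∀ i j, IsSign (A i j)) (hdet : A.det ≠ 0) :
    |per A| ≤ 4 ∨ |per A| = 8 ∧ StdEquiv A (Dmat 4 4) := by
  obtain ⟨e, d, C, he, hd, hC, rfl⟩ := exists_eq_diagonal_mul_bordered_mul_diagonal A hA
  choose g hg using fun a b => exists_signOf_eq (hC a b)
  set M : Matrix (Fin 4) (Fin 4) ℤ := bordered (of fun a b => signOf (g a b))
  have hCM : bordered C = (Int.castRingHom ℚ).mapMatrix M := by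
    rw [RingHom.mapMatrix_bordered]
    congr
    ext a b
    exact (hg a b).symm
  have habs : |per (diagonal e * bordered C * diagonal d)| = (M.permanentRec.natAbs : ℚ) := by
    rw [per_eq_permanent, permanent_diagonal_mul_mul_diagonal, abs_mul, abs_mul,
      (isSign_prod _ fun i _ => he i).abs_eq_one, (isSign_prod _ fun j _ => hd j).abs_eq_one,
      one_mul, one_mul, hCM, ← RingHom.map_permanent, permanent_eq_permanentRec]
    simp [Nat.cast_natAbs]
  have hdetM : M.detRec ≠ 0 := by
    rw [← det_eq_detRec]
    intro h
    apply hdet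
    rw [det_mul, det_mul, hCM, ← RingHom.map_det, h, map_zero, mul_zero, zero_mul]
  rcases natAbs_permanentRec_le_four_or_eq_eight_of_perm g hdetM with h4 | ⟨h8, τ, hτ⟩
  · left
    rw [habs]
    exact_mod_cast h4
  · right
    refine ⟨by rw [habs, h8]; norm_num, ?_⟩
    have hCτ : C = of fun a b => if τ a = b then 1 else -1 := by
      ext a b
      rw [← hg, hτ]
      by_cases h : τ a = b <;> simp [signOf, h]
    rw [hCτ]
    exact stdEquiv_Dmat_of_bordered_perm τ e d he hd

theorem order_four_nonsingular (A : Matrix (Fin 4) (Fin 4) ℚ)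
    (hA : ∀ i j, A i j = 1 ∨ A i j = -1) (hdet : A.det ≠ 0) :
    |per A| ≤ 8 ∧ per (Dmat 4 4) = 8 ∧
      (|per A| = 8 → StdEquiv A (Dmat 4 4)) ∧
      (|per A| < 8 → |per A| ≤ 4) ∧ per (Dmat 4 3) = 4 := by
  have hD4 : per (Dmat 4 4) = 8 := by
    rw [per_eq_permanent, permanent_eq_permanentRec]
    decide +kernel
  have hD3 : per (Dmat 4 3) = 4 := by
    rw [per_eq_permanent, permanent_eq_permanentRec]
    decide +kernel
  rcases abs_per_le_four_or_eq_eight_and_stdEquiv A hA hdet with h4 | ⟨h8, hequiv⟩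
  · exact ⟨by linarith, hD4, fun h => by linarith, fun _ => h4, hD3⟩
  · exact ⟨h8.le, hD4, fun _ => hequiv, fun h => absurd h8 h.ne, hD3⟩
end

section
/- Let A be a 3×3 (−1,1)-matrix whose rank over ℚ equals k. Then |per A| = per D_{(3,k−1)}, and A can be obtained from D_{(3,k−1)} by standard transformations. -/
/-!
Writing a `±1` matrix as `(-1) ^ B` with `B` over `𝔽₂`, sign changes of rows and columns add
`e i + d j` to `B`. After such changes the first row and column of `B` vanish, leaving only the
`2 × 2` block in the lower right corner; each of its 16 values is brought to the pattern of some
`D_{(3,l)}` by permutations and further sign changes. Standard transformations multiply the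
permanent by `±1` and do not change the rank, and `D_{(3,l)}` has rank `l + 1` (its rows past the
`l`-th repeat, and its leading `(l + 1) × (l + 1)` block is nonsingular) and nonnegative
permanent, so `l = k - 1`.
-/

open Matrix

theorem sum_perm_fin_succ {M : Type*} [AddCommMonoid M] {n : ℕ}
    (f : Equiv.Perm (Fin (n + 1)) → M) :
    ∑ σ, f σ = ∑ p, ∑ τ, f (Equiv.Perm.decomposeFin.symm (p, τ)) := by
  rw [← Equiv.sum_comp Equiv.Perm.decomposeFin.symm, Fintype.sum_prod_type]

theorem per_fin_three (A : Matrix (Fin 3) (Fin 3) ℚ) :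
    per A = A 0 0 * A 1 1 * A 2 2 + A 0 1 * A 1 2 * A 2 0 + A 0 2 * A 1 0 * A 2 1
      + A 0 0 * A 1 2 * A 2 1 + A 0 1 * A 1 0 * A 2 2 + A 0 2 * A 1 1 * A 2 0 := by
  have hτ2 (p : Fin 3) (τ : Equiv.Perm (Fin 2)) :
      Equiv.Perm.decomposeFin.symm (p, τ) 2 = Equiv.swap 0 p (τ 1).succ :=
    Equiv.Perm.decomposeFin_symm_apply_succ _ _ 1
  simp only [per, Fin.prod_univ_succ, Fin.isValue, Fin.succ_zero_eq_one, Finset.univ_unique,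
    Fin.default_eq_zero, Finset.prod_singleton, Fin.succ_one_eq_two, sum_perm_fin_succ,
    Nat.succ_eq_add_one, Nat.reduceAdd, Equiv.Perm.decomposeFin_symm_apply_zero,
    Equiv.Perm.decomposeFin_symm_apply_one, Equiv.swap_apply_def, Fin.succ_ne_zero, ↓reduceIte,
    hτ2, Equiv.Perm.default_eq, Finset.sum_singleton, Equiv.Perm.coe_one, id_eq, Fin.sum_univ_succ,
    one_ne_zero, Fin.reduceEq]
  ring

theorem per_signs_mul_submatrix {n : ℕ} (B : Matrix (Fin n) (Fin n) ℚ)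
    (ρ σ : Equiv.Perm (Fin n)) (ε δ : Fin n → ℚ) :
    per (fun i j => ε i * δ j * B (ρ i) (σ j)) = (∏ i, ε i) * (∏ j, δ j) * per B := by
  have hsub : per (B.submatrix ρ σ) = per B := by
    -- `per` is Mathlib's `permanent` of the transpose
    change ((Bᵀ.submatrix σ id).submatrix id ρ).permanent = Bᵀ.permanent
    rw [permanent_permute_rows, permanent_permute_cols]
  rw [← hsub]
  unfold per
  rw [Finset.mul_sum]
  refine Finset.sum_congr rfl fun τ _ => ?_
  rw [Finset.prod_mul_distrib, Finset.prod_mul_distrib, Equiv.prod_comp τ δ]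
  rfl

theorem abs_per_signs_mul_submatrix {n : ℕ} (B : Matrix (Fin n) (Fin n) ℚ)
    (ρ σ : Equiv.Perm (Fin n)) {ε δ : Fin n → ℚ} (hε : ∀ i, |ε i| = 1)
    (hδ : ∀ j, |δ j| = 1) :
    |per (fun i j => ε i * δ j * B (ρ i) (σ j))| = |per B| := by
  simp [per_signs_mul_submatrix, abs_mul, Finset.abs_prod, hε, hδ]

theorem Matrix.card_le_rank_of_det_submatrix_ne_zero {K m n ι : Type*} [CommRing K] [IsDomain K]
    [Fintype n] [Fintype ι] [DecidableEq ι] (A : Matrix m n K) (r : ι → m) (c : ι → n)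
    (h : (A.submatrix r c).det ≠ 0) : Fintype.card ι ≤ A.rank := by
  simpa [rank_of_det_ne_zero h] using rank_submatrix_le A r c

theorem rank_signs_mul_submatrix {K m n : Type*} [CommRing K] [IsDomain K]
    [Fintype m] [Fintype n] [DecidableEq m] [DecidableEq n] (B : Matrix m n K)
    (ρ : Equiv.Perm m) (σ : Equiv.Perm n) {ε : m → K} {δ : n → K} (hε : ∀ i, ε i ≠ 0)
    (hδ : ∀ j, δ j ≠ 0) :
    rank (fun i j => ε i * δ j * B (ρ i) (σ j)) = B.rank := by
  have hfac : (fun i j => ε i * δ j * B (ρ i) (σ j) : Matrix m n K)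
      = diagonal ε * B.submatrix ρ σ * diagonal δ := by
    ext i j
    simp only [mul_diagonal, diagonal_mul, submatrix_apply]
    ring
  rw [hfac, rank_mul_eq_left_of_det_ne_zero, rank_mul_eq_right_of_det_ne_zero, rank_submatrix]
  · simpa [det_diagonal, Finset.prod_ne_zero_iff] using hε
  · simpa [det_diagonal, Finset.prod_ne_zero_iff] using hδ

theorem rank_Dmat_le (n l : ℕ) : (Dmat n l).rank ≤ l + 1 := by
  rcases lt_or_ge l n with hl | hl
  · have hrows : Dmat n l = ((Dmat n l).submatrix (Fin.castLE hl) id).submatrix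
        (fun i : Fin n => (⟨min i l, by omega⟩ : Fin (l + 1))) id := by
      ext i j
      simp only [Dmat, submatrix_apply, Fin.val_castLE, id]
      grind
    rw [hrows]
    exact (rank_submatrix_le _ _ _).trans ((rank_le_card_height _).trans (by simp))
  · exact (rank_le_card_height _).trans (by simp only [Fintype.card_fin]; omega)

theorem rank_Dmat_three (l : Fin 3) : (Dmat 3 l).rank = l + 1 := by
  refine le_antisymm (rank_Dmat_le 3 l) ?_
  have hdet : (Dmat (l + 1) l).det ≠ 0 := by
    fin_cases l
    · show (Dmat 1 0).det ≠ 0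
      norm_num [Dmat]
    · show (Dmat 2 1).det ≠ 0
      norm_num [Dmat, det_fin_two]
    · show (Dmat 3 2).det ≠ 0
      norm_num [Dmat, det_fin_three]
  simpa using (Dmat 3 l).card_le_rank_of_det_submatrix_ne_zero (Fin.castLE l.isLt)
    (Fin.castLE l.isLt) hdet

theorem per_Dmat_three_nonneg (l : Fin 3) : 0 ≤ per (Dmat 3 l) := by
  fin_cases l <;> norm_num [per_fin_three, Dmat]

def dPattern (n l : ℕ) : Matrix (Fin n) (Fin n) (ZMod 2) :=
  fun i j => if (i : ℕ) = j ∧ (j : ℕ) < l then 1 else 0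

theorem Dmat_eq_neg_one_pow (n l : ℕ) (i j : Fin n) :
    Dmat n l i j = (-1) ^ (dPattern n l i j).val := by
  unfold Dmat dPattern
  split_ifs <;> simp [ZMod.val_one_eq_one_mod]

theorem neg_one_pow_val_add (x y : ZMod 2) :
    (-1 : ℚ) ^ (x + y).val = (-1) ^ x.val * (-1) ^ y.val := by
  rw [ZMod.val_add, ← neg_one_pow_eq_pow_mod_two, pow_add]

theorem exists_eq_neg_one_pow_val {a : ℚ} (ha : a = 1 ∨ a = -1) :
    ∃ x : ZMod 2, a = (-1) ^ x.val := by
  rcases ha with rfl | rfl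
  exacts [⟨0, by simp⟩, ⟨1, by simp [ZMod.val_one_eq_one_mod]⟩]

theorem exists_eq_add_dPattern_of_normalized (x y z w : ZMod 2) :
    ∃ l : Fin 3, ∃ ρ σ : Equiv.Perm (Fin 3), ∃ e d : Fin 3 → ZMod 2,
      ∀ i j, ![![0, 0, 0], ![0, x, y], ![0, z, w]] i j
        = e i + d j + dPattern 3 l (ρ i) (σ j) := by
  -- witnesses found by exhaustive search
  fin_cases x <;> fin_cases y <;> fin_cases z <;> fin_cases w
  exacts [
    ⟨0, 1, 1, ![0, 0, 0], ![0, 0, 0], by decide⟩,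
    ⟨1, Equiv.swap 0 2, Equiv.swap 0 2, ![0, 0, 0], ![0, 0, 0], by decide⟩,
    ⟨1, Equiv.swap 0 2, Equiv.swap 0 1, ![0, 0, 0], ![0, 0, 0], by decide⟩,
    ⟨1, Equiv.swap 0 2, 1, ![0, 0, 1], ![0, 0, 0], by decide⟩,
    ⟨1, Equiv.swap 0 1, Equiv.swap 0 2, ![0, 0, 0], ![0, 0, 0], by decide⟩,
    ⟨1, 1, Equiv.swap 0 2, ![0, 0, 0], ![0, 0, 1], by decide⟩,
    ⟨2, Equiv.swap 0 2, (finRotate 3).symm, ![0, 0, 0], ![0, 0, 0], by decide⟩,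
    ⟨2, 1, 1, ![1, 0, 0], ![0, 1, 1], by decide⟩,
    ⟨1, Equiv.swap 0 1, Equiv.swap 0 1, ![0, 0, 0], ![0, 0, 0], by decide⟩,
    ⟨2, Equiv.swap 0 2, Equiv.swap 0 2, ![0, 0, 0], ![0, 0, 0], by decide⟩,
    ⟨1, 1, Equiv.swap 0 1, ![0, 0, 0], ![0, 1, 0], by decide⟩,
    ⟨2, Equiv.swap 0 2, 1, ![0, 0, 1], ![0, 0, 0], by decide⟩,
    ⟨1, Equiv.swap 0 1, 1, ![0, 1, 0], ![0, 0, 0], by decide⟩,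
    ⟨2, 1, Equiv.swap 0 2, ![0, 0, 0], ![0, 0, 1], by decide⟩,
    ⟨2, 1, (finRotate 3).symm, ![0, 0, 0], ![0, 1, 0], by decide⟩,
    ⟨1, 1, 1, ![1, 0, 0], ![0, 1, 1], by decide⟩]

theorem exists_eq_add_dPattern (B : Matrix (Fin 3) (Fin 3) (ZMod 2)) :
    ∃ l : Fin 3, ∃ ρ σ : Equiv.Perm (Fin 3), ∃ e d : Fin 3 → ZMod 2,
      ∀ i j, B i j = e i + d j + dPattern 3 l (ρ i) (σ j) := by
  set C : Matrix (Fin 3) (Fin 3) (ZMod 2) := fun i j => B i j - B i 0 - B 0 j + B 0 0 with hC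
  have hrow (j : Fin 3) : C 0 j = 0 := by simp only [hC]; ring
  have hcol (i : Fin 3) : C i 0 = 0 := by simp only [hC]; ring
  have hCnorm (i j : Fin 3) :
      C i j = ![![0, 0, 0], ![0, C 1 1, C 1 2], ![0, C 2 1, C 2 2]] i j := by
    fin_cases i <;> fin_cases j <;> simp [hrow, hcol]
  obtain ⟨l, ρ, σ, e, d, h⟩ :=
    exists_eq_add_dPattern_of_normalized (C 1 1) (C 1 2) (C 2 1) (C 2 2)
  refine ⟨l, ρ, σ, fun i => e i + B i 0 - B 0 0, fun j => d j + B 0 j, fun i j => ?_⟩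
  have hij : C i j = e i + d j + dPattern 3 l (ρ i) (σ j) := by rw [hCnorm]; exact h i j
  linear_combination hij

theorem exists_signs_perms_Dmat_three (A : Matrix (Fin 3) (Fin 3) ℚ)
    (hA : ∀ i j, A i j = 1 ∨ A i j = -1) :
    ∃ l : Fin 3, ∃ ρ σ : Equiv.Perm (Fin 3), ∃ ε δ : Fin 3 → ℚ,
      (∀ i, ε i = 1 ∨ ε i = -1) ∧ (∀ j, δ j = 1 ∨ δ j = -1) ∧
      A = fun i j => ε i * δ j * Dmat 3 l (ρ i) (σ j) := by
  choose B hB using fun i j => exists_eq_neg_one_pow_val (hA i j)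
  obtain ⟨l, ρ, σ, e, d, h⟩ := exists_eq_add_dPattern B
  refine ⟨l, ρ, σ, fun i => (-1) ^ (e i).val, fun j => (-1) ^ (d j).val,
    fun i => neg_one_pow_eq_or ℚ _, fun j => neg_one_pow_eq_or ℚ _, ?_⟩
  ext i j
  rw [hB, h, Dmat_eq_neg_one_pow, neg_one_pow_val_add, neg_one_pow_val_add]

theorem order_three (k : ℕ) (A : Matrix (Fin 3) (Fin 3) ℚ)
    (hA : ∀ i j, A i j = 1 ∨ A i j = -1) (hrk : A.rank = k) :
    |per A| = per (Dmat 3 (k - 1)) ∧ StdEquiv A (Dmat 3 (k - 1)) := by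
  obtain ⟨l, ρ, σ, ε, δ, hε, hδ, rfl⟩ := exists_signs_perms_Dmat_three A hA
  have hε_abs (i : Fin 3) : |ε i| = 1 := (abs_eq zero_le_one).2 (hε i)
  have hδ_abs (j : Fin 3) : |δ j| = 1 := (abs_eq zero_le_one).2 (hδ j)
  have hl : k - 1 = l := by
    rw [← hrk, rank_signs_mul_submatrix _ _ _ (fun i => abs_ne_zero.1 (by simp [hε_abs]))
      (fun j => abs_ne_zero.1 (by simp [hδ_abs])), rank_Dmat_three, Nat.add_sub_cancel]
  rw [hl]
  refine ⟨?_, ρ, σ, ε, δ, hε, hδ, Or.inl fun _ _ => rfl⟩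
  rw [abs_per_signs_mul_submatrix _ _ _ hε_abs hδ_abs, abs_of_nonneg (per_Dmat_three_nonneg l)]
end

section
/- For every integer n ≥ 5, the identity per D_{(n,n)} = (n−2)·per D_{(n−1,n−1)} + (2n−2)·per D_{(n−2,n−2)} holds. -/
open Matrix

/-!
Writing `D_{(n,n)} = J - 2I` and expanding `∏ᵢ (1 - 2[σ i = i])` over sets of fixed points gives
`per D_{(n,n)} = ∑ₖ n(n-1)⋯(n-k+1) (-2)^(n-k)`, from which `a (n+1) = (n+1) a n + (-2)^(n+1)`
for `a n = per D_{(n,n)}`. Two consecutive instances of this first-order recurrence combine to the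
second-order one, the `(-2)`-powers cancelling.
-/

open Finset

theorem Equiv.Perm.card_fixing_pointwise {α : Type*} [Fintype α] [DecidableEq α] (t : Finset α) :
    #{σ : Equiv.Perm α | ∀ i ∈ t, σ i = i} = (Fintype.card α - #t).factorial := by
  rw [← Fintype.card_subtype, ← Fintype.card_coe t, ← Fintype.card_subtype_compl,
    ← Fintype.card_perm]
  refine Fintype.card_congr ((Equiv.subtypeEquivRight fun σ => ?_).trans
    (Equiv.Perm.subtypeEquivSubtypePerm (· ∉ t)).symm)
  simp

lemma Dmat_self_apply (n : ℕ) (i j : Fin n) :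
    Dmat n n i j = 1 + if j = i then -2 else 0 := by
  by_cases h : j = i
  · subst h; norm_num [Dmat]
  · simp [Dmat, h, Fin.val_ne_of_ne (Ne.symm h)]

lemma per_Dmat_self_eq_sum_choose (n : ℕ) :
    per (Dmat n n) =
      ∑ m ∈ range (n + 1), (n.choose m : ℚ) * (n - m).factorial * (-2) ^ m := by
  have expand (σ : Equiv.Perm (Fin n)) : ∏ i, Dmat n n i (σ i) =
      ∑ t ∈ (univ : Finset (Fin n)).powerset, if ∀ i ∈ t, σ i = i then (-2 : ℚ) ^ #t else 0 := by
    simp only [Dmat_self_apply, prod_one_add, prod_ite_zero, prod_const]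
  have count (t : Finset (Fin n)) :
      ∑ σ : Equiv.Perm (Fin n), (if ∀ i ∈ t, σ i = i then (-2 : ℚ) ^ #t else 0) =
        (n - #t).factorial * (-2) ^ #t := by
    rw [sum_ite, sum_const_zero, add_zero, sum_const, nsmul_eq_mul]
    congr 2
    convert Equiv.Perm.card_fixing_pointwise t
    simp
  simp only [per, expand]
  rw [sum_comm]
  simp only [count]
  rw [sum_powerset_apply_card (fun m => ((n - m).factorial : ℚ) * (-2) ^ m), card_univ,
    Fintype.card_fin]
  simp only [nsmul_eq_mul, mul_assoc]

lemma per_Dmat_self_eq_sum_descFactorial (n : ℕ) :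
    per (Dmat n n) = ∑ k ∈ range (n + 1), (n.descFactorial k : ℚ) * (-2) ^ (n - k) := by
  rw [per_Dmat_self_eq_sum_choose, ← sum_range_reflect]
  refine sum_congr rfl fun k hk => ?_
  have hk : k ≤ n := Nat.lt_succ_iff.mp (mem_range.mp hk)
  rw [Nat.add_sub_cancel, Nat.choose_symm hk, Nat.sub_sub_self hk,
    Nat.descFactorial_eq_factorial_mul_choose]
  push_cast
  ring

lemma per_Dmat_self_succ (n : ℕ) :
    per (Dmat (n + 1) (n + 1)) = (n + 1) * per (Dmat n n) + (-2) ^ (n + 1) := by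
  simp only [per_Dmat_self_eq_sum_descFactorial, sum_range_succ' _ (n + 1),
    Nat.succ_descFactorial_succ, mul_sum]
  push_cast
  simp only [Nat.descFactorial_zero, Nat.cast_one, one_mul, mul_assoc]

theorem per_D_diag_recurrence (n : ℕ) (hn : 5 ≤ n) :
    per (Dmat n n) =
      ((n : ℚ) - 2) * per (Dmat (n - 1) (n - 1)) +
        (2 * (n : ℚ) - 2) * per (Dmat (n - 2) (n - 2)) := by
  obtain ⟨m, rfl⟩ : ∃ m, n = m + 2 := ⟨n - 2, by omega⟩
  rw [show m + 2 - 1 = m + 1 by omega, Nat.add_sub_cancel]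
  have h₂ := per_Dmat_self_succ (m + 1)
  have h₁ := per_Dmat_self_succ m
  push_cast at h₂ ⊢
  linear_combination h₂ + 2 * h₁
end

section
/- For every integer n ≥ 5, the identity per D_{(n,n−1)} = 2·per D_{(n−2,n−3)} + (n²−7n+12)·per D_{(n−2,n−5)} + 2(n−3)·per D_{(n−2,n−4)} holds. -/
open Matrix

/-- Closed form for the permanent of `Dmat n l`. -/
def pD (n l : ℕ) : ℚ :=
  ∑ k ∈ Finset.range (l + 1), (l.choose k : ℚ) * (-2) ^ k * ((n - k).factorial : ℚ)

lemma card_fixing {n : ℕ} (t : Finset (Fin n)) :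
    (Finset.univ.filter (fun σ : Equiv.Perm (Fin n) => ∀ i ∈ t, σ i = i)).card
      = (n - t.card).factorial := by
  rw [← Fintype.card_subtype]
  have e1 : {σ : Equiv.Perm (Fin n) // ∀ i ∈ t, σ i = i}
      ≃ Equiv.Perm {x : Fin n // x ∉ t} := by
    refine Equiv.trans ?_ (Equiv.Perm.subtypeEquivSubtypePerm (fun x => x ∉ t)).symm
    exact Equiv.subtypeEquivRight (fun σ => by simp [not_not])
  rw [Fintype.card_congr e1, Fintype.card_perm]
  congr 1
  rw [Fintype.card_subtype_compl, Fintype.card_fin, Fintype.card_coe]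

lemma card_filter_lt (n l : ℕ) (h : l ≤ n) :
    (Finset.univ.filter (fun i : Fin n => (i : ℕ) < l)).card = l := by
  have : Finset.univ.filter (fun i : Fin n => (i : ℕ) < l)
      = Finset.map (Fin.castLEEmb h) Finset.univ := by
    ext i
    simp only [Finset.mem_filter, Finset.mem_univ, true_and, Finset.mem_map,
      Fin.castLEEmb_apply]
    constructor
    · intro hi
      exact ⟨⟨(i : ℕ), hi⟩, by ext; simp⟩
    · rintro ⟨j, rfl⟩
      simp [j.isLt]
  rw [this, Finset.card_map, Finset.card_univ, Fintype.card_fin]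

lemma per_eq_pD (n l : ℕ) (h : l ≤ n) : per (Dmat n l) = pD n l := by
  classical
  set L : Finset (Fin n) := Finset.univ.filter (fun i : Fin n => (i : ℕ) < l) with hL
  have step1 : per (Dmat n l)
      = ∑ σ : Equiv.Perm (Fin n),
          ∏ i ∈ Finset.univ.filter (fun i => σ i = i ∧ (i : ℕ) < l), ((-2 : ℚ) + 1) := by
    unfold per
    refine Finset.sum_congr rfl (fun σ _ => ?_)
    rw [Finset.prod_filter]
    refine Finset.prod_congr rfl (fun i _ => ?_)
    unfold Dmat
    have hiff : ((i : ℕ) = ((σ i : Fin n) : ℕ) ∧ ((σ i : Fin n) : ℕ) < l)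
        ↔ (σ i = i ∧ (i : ℕ) < l) := by
      constructor
      · rintro ⟨h1, h2⟩
        have : σ i = i := by
          ext; omega
        exact ⟨this, by rwa [this] at h2⟩
      · rintro ⟨h1, h2⟩
        rw [h1]
        exact ⟨rfl, h2⟩
    rw [if_congr hiff rfl rfl]
    by_cases hc : σ i = i ∧ (i : ℕ) < l <;> simp [hc] <;> norm_num
  rw [step1]
  have step2 : ∀ σ : Equiv.Perm (Fin n),
      ∏ i ∈ Finset.univ.filter (fun i => σ i = i ∧ (i : ℕ) < l), ((-2 : ℚ) + 1)
        = ∑ t ∈ L.powerset, (if (∀ i ∈ t, σ i = i) then ((-2 : ℚ)) ^ t.card else 0) := by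
    intro σ
    set Fσ : Finset (Fin n) := Finset.univ.filter (fun i => σ i = i ∧ (i : ℕ) < l) with hFσ
    have hsub : Fσ ⊆ L := by
      intro i hi
      simp only [hFσ, hL, Finset.mem_filter, Finset.mem_univ, true_and] at hi ⊢
      exact hi.2
    rw [Finset.prod_add]
    have : ∀ t ∈ Fσ.powerset, ((∏ i ∈ t, (-2 : ℚ)) * ∏ i ∈ Fσ \ t, (1:ℚ))
        = (-2 : ℚ) ^ t.card := by
      intro t ht
      simp [Finset.prod_const]
    rw [Finset.sum_congr rfl this]
    have hpows : Fσ.powerset = L.powerset.filter (fun t => ∀ i ∈ t, σ i = i) := by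
      ext t
      simp only [Finset.mem_powerset, Finset.mem_filter]
      constructor
      · intro ht
        refine ⟨ht.trans hsub, fun i hi => ?_⟩
        have := ht hi
        simp only [hFσ, Finset.mem_filter, Finset.mem_univ, true_and] at this
        exact this.1
      · rintro ⟨htL, hfix⟩
        intro i hi
        have hiL := htL hi
        simp only [hL, Finset.mem_filter, Finset.mem_univ, true_and] at hiL
        simp only [hFσ, Finset.mem_filter, Finset.mem_univ, true_and]
        exact ⟨hfix i hi, hiL⟩
    rw [hpows, Finset.sum_filter]
  rw [Finset.sum_congr rfl (fun σ _ => step2 σ), Finset.sum_comm]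
  have step3 : ∀ t ∈ L.powerset,
      (∑ σ : Equiv.Perm (Fin n), if (∀ i ∈ t, σ i = i) then ((-2 : ℚ)) ^ t.card else 0)
        = (-2 : ℚ) ^ t.card * ((n - t.card).factorial : ℚ) := by
    intro t _
    rw [← Finset.sum_filter, Finset.sum_const, card_fixing, nsmul_eq_mul, mul_comm]
  rw [Finset.sum_congr rfl step3, Finset.sum_powerset]
  have hcardL : L.card = l := card_filter_lt n l h
  rw [hcardL]
  unfold pD
  refine Finset.sum_congr rfl (fun j hj => ?_)
  have : ∀ t ∈ Finset.powersetCard j L,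
      (-2 : ℚ) ^ t.card * ((n - t.card).factorial : ℚ)
        = (-2 : ℚ) ^ j * ((n - j).factorial : ℚ) := by
    intro t ht
    rw [(Finset.mem_powersetCard.mp ht).2]
  rw [Finset.sum_congr rfl this, Finset.sum_const, Finset.card_powersetCard, hcardL,
    nsmul_eq_mul]
  ring

lemma pD_A (n l : ℕ) : pD (n + 1) (l + 1) = pD (n + 1) l - 2 * pD n l := by
  unfold pD
  rw [Finset.sum_range_succ' _ (l + 1)]
  have h1 : ∀ k ∈ Finset.range (l + 1),
      (((l + 1).choose (k + 1) : ℚ)) * (-2) ^ (k + 1) * ((n + 1 - (k + 1)).factorial : ℚ)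
        = (l.choose k : ℚ) * (-2) ^ (k + 1) * ((n - k).factorial : ℚ)
          + (l.choose (k + 1) : ℚ) * (-2) ^ (k + 1) * ((n - k).factorial : ℚ) := by
    intro k _
    have hs : n + 1 - (k + 1) = n - k := by omega
    rw [hs, Nat.choose_succ_succ]
    push_cast
    ring
  rw [Finset.sum_congr rfl h1, Finset.sum_add_distrib]
  have h2 : ∑ k ∈ Finset.range (l + 1),
      (l.choose k : ℚ) * (-2) ^ (k + 1) * ((n - k).factorial : ℚ)
        = -2 * ∑ k ∈ Finset.range (l + 1),
            (l.choose k : ℚ) * (-2) ^ k * ((n - k).factorial : ℚ) := by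
    rw [Finset.mul_sum]
    exact Finset.sum_congr rfl (fun k _ => by ring)
  have h3 : (∑ k ∈ Finset.range (l + 1),
        (l.choose (k + 1) : ℚ) * (-2) ^ (k + 1) * ((n - k).factorial : ℚ))
      + ((l + 1).choose 0 : ℚ) * (-2) ^ 0 * ((n + 1 - 0).factorial : ℚ)
        = ∑ k ∈ Finset.range (l + 1),
            (l.choose k : ℚ) * (-2) ^ k * ((n + 1 - k).factorial : ℚ) := by
    rw [Finset.sum_range_succ'
      (fun k => (l.choose k : ℚ) * (-2) ^ k * ((n + 1 - k).factorial : ℚ)) l]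
    rw [Finset.sum_range_succ]
    have hz : (l.choose (l + 1) : ℚ) = 0 := by
      rw [Nat.choose_succ_self]; norm_num
    rw [hz]
    have hsum : ∀ k ∈ Finset.range l,
        (l.choose (k + 1) : ℚ) * (-2) ^ (k + 1) * ((n - k).factorial : ℚ)
          = (l.choose (k + 1) : ℚ) * (-2) ^ (k + 1) * ((n + 1 - (k + 1)).factorial : ℚ) := by
      intro k _
      have hs : n + 1 - (k + 1) = n - k := by omega
      rw [hs]
    rw [Finset.sum_congr rfl hsum]
    simp
  linear_combination h2 + h3

lemma pD_B (n l : ℕ) (h : l ≤ n) :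
    pD (n + 2) (l + 1) = ((n : ℚ) + 2) * pD (n + 1) (l + 1) + 2 * ((l : ℚ) + 1) * pD n l := by
  unfold pD
  have h1 : ∀ k ∈ Finset.range (l + 1 + 1),
      ((l + 1).choose k : ℚ) * (-2) ^ k * ((n + 2 - k).factorial : ℚ)
        = ((n : ℚ) + 2) * (((l + 1).choose k : ℚ) * (-2) ^ k * ((n + 1 - k).factorial : ℚ))
          - (k : ℚ) * (((l + 1).choose k : ℚ) * (-2) ^ k * ((n + 1 - k).factorial : ℚ)) := by
    intro k hk
    rw [Finset.mem_range] at hk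
    have hk' : k ≤ n + 1 := by omega
    have hs : n + 2 - k = (n + 1 - k) + 1 := by omega
    rw [hs, Nat.factorial_succ]
    have hc : ((n + 1 - k : ℕ) : ℚ) = (n : ℚ) + 1 - (k : ℚ) := by
      rw [Nat.cast_sub hk']; push_cast; ring
    push_cast [hc]
    ring
  rw [Finset.sum_congr rfl h1, Finset.sum_sub_distrib, ← Finset.mul_sum]
  have h2 : ∑ k ∈ Finset.range (l + 1 + 1),
      (k : ℚ) * (((l + 1).choose k : ℚ) * (-2) ^ k * ((n + 1 - k).factorial : ℚ))
        = -2 * ((l : ℚ) + 1) * ∑ k ∈ Finset.range (l + 1),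
            (l.choose k : ℚ) * (-2) ^ k * ((n - k).factorial : ℚ) := by
    rw [Finset.sum_range_succ' _ (l + 1)]
    simp only [Nat.cast_zero, zero_mul, add_zero]
    rw [Finset.mul_sum]
    refine Finset.sum_congr rfl (fun k _ => ?_)
    have hs : n + 1 - (k + 1) = n - k := by omega
    rw [hs]
    have hch := congrArg (Nat.cast : ℕ → ℚ) (Nat.add_one_mul_choose_eq l k)
    push_cast at hch
    push_cast
    linear_combination (2 * (-2 : ℚ) ^ k * ((n - k).factorial : ℚ)) * hch
  rw [h2]
  ring

theorem per_D_laplace_identity (n : ℕ) (hn : 5 ≤ n) :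
    per (Dmat n (n - 1)) =
      2 * per (Dmat (n - 2) (n - 3)) +
        ((n : ℚ) ^ 2 - 7 * (n : ℚ) + 12) * per (Dmat (n - 2) (n - 5)) +
        2 * ((n : ℚ) - 3) * per (Dmat (n - 2) (n - 4)) := by
  obtain ⟨m, rfl⟩ : ∃ m, n = m + 5 := ⟨n - 5, by omega⟩
  have e1 : per (Dmat (m + 5) (m + 5 - 1)) = pD (m + 5) (m + 4) :=
    per_eq_pD (m + 5) (m + 4) (by omega)
  have e2 : per (Dmat (m + 5 - 2) (m + 5 - 3)) = pD (m + 3) (m + 2) :=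
    per_eq_pD (m + 3) (m + 2) (by omega)
  have e3 : per (Dmat (m + 5 - 2) (m + 5 - 5)) = pD (m + 3) m :=
    per_eq_pD (m + 3) m (by omega)
  have e4 : per (Dmat (m + 5 - 2) (m + 5 - 4)) = pD (m + 3) (m + 1) :=
    per_eq_pD (m + 3) (m + 1) (by omega)
  rw [e1, e2, e3, e4]
  have h1 : pD (m + 5) (m + 4) = pD (m + 5) (m + 3) - 2 * pD (m + 4) (m + 3) :=
    pD_A (m + 4) (m + 3)
  have h2 : pD (m + 5) (m + 3)
      = (((m + 3 : ℕ) : ℚ) + 2) * pD (m + 4) (m + 3)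
        + 2 * (((m + 2 : ℕ) : ℚ) + 1) * pD (m + 3) (m + 2) :=
    pD_B (m + 3) (m + 2) (by omega)
  have h3 : pD (m + 4) (m + 3) = pD (m + 4) (m + 2) - 2 * pD (m + 3) (m + 2) :=
    pD_A (m + 3) (m + 2)
  have h4 : pD (m + 4) (m + 2)
      = (((m + 2 : ℕ) : ℚ) + 2) * pD (m + 3) (m + 2)
        + 2 * (((m + 1 : ℕ) : ℚ) + 1) * pD (m + 2) (m + 1) :=
    pD_B (m + 2) (m + 1) (by omega)
  have h5 : pD (m + 3) (m + 2) = pD (m + 3) (m + 1) - 2 * pD (m + 2) (m + 1) :=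
    pD_A (m + 2) (m + 1)
  have h6 : pD (m + 3) (m + 1) = pD (m + 3) m - 2 * pD (m + 2) m :=
    pD_A (m + 2) m
  have h7 : pD (m + 2) (m + 1) = pD (m + 2) m - 2 * pD (m + 1) m :=
    pD_A (m + 1) m
  have h8 : pD (m + 3) (m + 1)
      = (((m + 1 : ℕ) : ℚ) + 2) * pD (m + 2) (m + 1)
        + 2 * (((m : ℕ) : ℚ) + 1) * pD (m + 1) m :=
    pD_B (m + 1) m (by omega)
  push_cast at h2 h4 h8 ⊢
  linear_combination h1 + h2 + ((m : ℚ) + 3) * h3 + ((m : ℚ) + 3) * h4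
    + ((m : ℚ) + 2) * ((m : ℚ) + 5) * h5 + ((m : ℚ) + 2) * ((m : ℚ) + 1) * h6
    + 2 * ((m : ℚ) + 2) * ((m : ℚ) + 1) * h7 + 2 * ((m : ℚ) + 2) * h8
end

section
/- Let n > 2 and let A be a 2×n (−1,1)-matrix of rank 2 over ℚ. Then mper A ≤ mper D_{(n,2,1)}, and equality holds if and only if A can be obtained from D_{(n,2,1)} by permutations of rows and columns and multiplications of rows or columns by −1. -/
open Matrix

/-- The rectangular matrix `D_{(n,k,l)}` (`k` rows, `n` columns): `-1` on the first `l`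
diagonal entries, `1` elsewhere. -/
def Dr (n k l : ℕ) : Matrix (Fin k) (Fin n) ℚ :=
  fun i j => if (i : ℕ) = (j : ℕ) ∧ (j : ℕ) < l then -1 else 1

/-- `A` is obtained from `B` by permutations of rows and columns and multiplications of
rows or columns by `-1` (rectangular case, no transposition). -/
def RectEquiv {k n : ℕ} (A B : Matrix (Fin k) (Fin n) ℚ) : Prop :=
  ∃ (ρ : Equiv.Perm (Fin k)) (σ : Equiv.Perm (Fin n)) (ε : Fin k → ℚ) (δ : Fin n → ℚ),
    (∀ i, ε i = 1 ∨ ε i = -1) ∧ (∀ j, δ j = 1 ∨ δ j = -1) ∧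
    ∀ i j, A i j = ε i * δ j * B (ρ i) (σ j)

/-- `mper A`: the sum of `|per B|` over all `k × k` submatrices `B` of a `k × n` matrix `A`
obtained by choosing `k` of the `n` columns (keeping their order). -/
def mper {k n : ℕ} (A : Matrix (Fin k) (Fin n) ℚ) : ℚ :=
  ∑ s ∈ (Finset.powersetCard k (Finset.univ : Finset (Fin n))).attach,
    |per (A.submatrix id (s.1.orderEmbOfFin (Finset.mem_powersetCard.mp s.2).2))|

lemma perm_fin_two (ρ : Equiv.Perm (Fin 2)) : (ρ 0 = 0 ∧ ρ 1 = 1) ∨ (ρ 0 = 1 ∧ ρ 1 = 0) := by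
  revert ρ; decide

lemma per_fin_two (B : Matrix (Fin 2) (Fin 2) ℚ) :
    per B = B 0 0 * B 1 1 + B 0 1 * B 1 0 := by
  have huniv : (Finset.univ : Finset (Equiv.Perm (Fin 2))) = {Equiv.refl (Fin 2), Equiv.swap 0 1} := by decide
  rw [per, huniv, Finset.sum_insert (by decide), Finset.sum_singleton]
  simp [Fin.prod_univ_two]

lemma abs_key (a b c d : ℚ) (ha : a = 1 ∨ a = -1) (hb : b = 1 ∨ b = -1)
    (hc : c = 1 ∨ c = -1) (hd : d = 1 ∨ d = -1) :
    |a * d + c * b| = if a * b = c * d then 2 else 0 := by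
  rcases ha with rfl | rfl <;> rcases hb with rfl | rfl <;>
    rcases hc with rfl | rfl <;> rcases hd with rfl | rfl <;> norm_num

lemma two_choose_two (m : ℕ) : 2 * m.choose 2 = m * (m - 1) := by
  rw [Nat.choose_two_right]
  have : Even (m * (m - 1)) := by
    rcases m with _ | j
    · simp
    · simpa [Nat.mul_comm] using Nat.even_mul_succ_self j
  obtain ⟨r, hr⟩ := this
  omega

lemma mper_formula {n : ℕ} (A : Matrix (Fin 2) (Fin n) ℚ)
    (hA : ∀ i j, A i j = 1 ∨ A i j = -1) :
    mper A = ((Finset.univ.filter fun j => A 0 j * A 1 j = 1).card *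
        ((Finset.univ.filter fun j => A 0 j * A 1 j = 1).card - 1) +
        (Finset.univ.filter fun j => A 0 j * A 1 j = 1)ᶜ.card *
        ((Finset.univ.filter fun j => A 0 j * A 1 j = 1)ᶜ.card - 1) : ℕ) := by
  classical
  set P := (Finset.univ.filter fun j => A 0 j * A 1 j = 1) with hPdef
  have key : ∀ s (hs : s ∈ Finset.powersetCard 2 (Finset.univ : Finset (Fin n))),
      |per (A.submatrix id (s.orderEmbOfFin (Finset.mem_powersetCard.mp hs).2))| =
      (if s ⊆ P then (2:ℚ) else 0) + (if s ⊆ Pᶜ then 2 else 0) := by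
    intro s hs
    set e := s.orderEmbOfFin (Finset.mem_powersetCard.mp hs).2 with he
    have h0 : e 0 ∈ s := Finset.orderEmbOfFin_mem _ _ _
    have h1 : e 1 ∈ s := Finset.orderEmbOfFin_mem _ _ _
    have hne : e 0 ≠ e 1 := by
      intro h
      exact absurd (e.injective h) (by decide)
    have hseq : s = {e 0, e 1} := by
      refine (Finset.eq_of_subset_of_card_le ?_ ?_).symm
      · intro x hx
        simp only [Finset.mem_insert, Finset.mem_singleton] at hx
        rcases hx with rfl | rfl <;> assumption
      · rw [(Finset.mem_powersetCard.mp hs).2, Finset.card_insert_of_notMem (by simpa using hne),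
          Finset.card_singleton]
    have hper : per (A.submatrix id e) =
        A 0 (e 0) * A 1 (e 1) + A 0 (e 1) * A 1 (e 0) := by
      rw [per_fin_two]; simp [Matrix.submatrix_apply]
    rw [hper, abs_key _ _ _ _ (hA 0 (e 0)) (hA 1 (e 0)) (hA 0 (e 1)) (hA 1 (e 1))]
    have hmemP : ∀ j, j ∈ P ↔ A 0 j * A 1 j = 1 := by
      intro j; simp [hPdef]
    have hp : ∀ j, A 0 j * A 1 j = 1 ∨ A 0 j * A 1 j = -1 := by
      intro j
      rcases hA 0 j with h | h <;> rcases hA 1 j with h' | h' <;> simp [h, h']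
    have hmemPc : ∀ j, j ∈ Pᶜ ↔ A 0 j * A 1 j = -1 := by
      intro j
      rw [Finset.mem_compl, hmemP]
      rcases hp j with h | h <;> simp [h] <;> norm_num
    have hsubP : s ⊆ P ↔ (A 0 (e 0) * A 1 (e 0) = 1 ∧ A 0 (e 1) * A 1 (e 1) = 1) := by
      rw [hseq, Finset.insert_subset_iff, Finset.singleton_subset_iff, hmemP, hmemP]
    have hsubPc : s ⊆ Pᶜ ↔ (A 0 (e 0) * A 1 (e 0) = -1 ∧ A 0 (e 1) * A 1 (e 1) = -1) := by
      rw [hseq, Finset.insert_subset_iff, Finset.singleton_subset_iff, hmemPc, hmemPc]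
    rcases hp (e 0) with h0' | h0' <;> rcases hp (e 1) with h1' | h1' <;>
      simp [hsubP, hsubPc, h0', h1'] <;> norm_num
  rw [mper]
  rw [Finset.sum_congr rfl fun s _ => key s.1 s.2,
    Finset.sum_attach _ (fun t => (if t ⊆ P then (2:ℚ) else 0) + if t ⊆ Pᶜ then 2 else 0)]
  rw [Finset.sum_add_distrib, ← Finset.sum_filter, ← Finset.sum_filter,
    Finset.sum_const, Finset.sum_const]
  have hfilt : ∀ Q : Finset (Fin n),
      (Finset.powersetCard 2 (Finset.univ : Finset (Fin n))).filter (· ⊆ Q) =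
      Finset.powersetCard 2 Q := by
    intro Q
    ext t
    simp only [Finset.mem_filter, Finset.mem_powersetCard]
    constructor
    · rintro ⟨⟨-, h2⟩, h3⟩; exact ⟨h3, h2⟩
    · rintro ⟨h1, h2⟩; exact ⟨⟨Finset.subset_univ _, h2⟩, h1⟩
  rw [hfilt, hfilt, Finset.card_powersetCard, Finset.card_powersetCard]
  have hc : ∀ m : ℕ, ((m.choose 2 : ℕ) : ℚ) * 2 = ((m * (m - 1) : ℕ) : ℚ) := by
    intro m
    rw [← two_choose_two m]
    push_cast
    ring
  simp only [nsmul_eq_mul]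
  rw [mul_comm ((P.card.choose 2 : ℕ) : ℚ) 2, mul_comm ((Pᶜ.card.choose 2 : ℕ) : ℚ) 2,
    mul_comm 2 ((P.card.choose 2 : ℕ) : ℚ), mul_comm 2 ((Pᶜ.card.choose 2 : ℕ) : ℚ), hc, hc]
  push_cast
  ring

lemma rank_le_one_of_row_mul {n : ℕ} (A : Matrix (Fin 2) (Fin n) ℚ) (c : ℚ) (hc : c ≠ 0)
    (h : ∀ j, A 0 j = c * A 1 j) : A.rank ≤ 1 := by
  have hv : (![c, 1] : Fin 2 → ℚ) ≠ 0 := by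
    intro hv
    have := congrFun hv 1
    simp at this
  have hr : LinearMap.range A.mulVecLin ≤ Submodule.span ℚ {![c, 1]} := by
    rintro y ⟨x, rfl⟩
    have : A.mulVecLin x = (A 1 ⬝ᵥ x) • ![c, 1] := by
      funext i
      fin_cases i
      · show A.mulVec x 0 = (A 1 ⬝ᵥ x) * c
        simp only [Matrix.mulVec, dotProduct]
        rw [Finset.sum_mul]
        refine Finset.sum_congr rfl fun j _ => ?_
        rw [h j]; ring
      · show A.mulVec x 1 = (A 1 ⬝ᵥ x) * 1
        simp [Matrix.mulVec, dotProduct]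
    rw [this]
    exact Submodule.smul_mem _ _ (Submodule.mem_span_singleton_self _)
  calc A.rank = Module.finrank ℚ (LinearMap.range A.mulVecLin) := rfl
    _ ≤ Module.finrank ℚ (Submodule.span ℚ {![c, 1]}) := Submodule.finrank_mono hr
    _ = 1 := finrank_span_singleton hv

lemma nat_key (a b : ℕ) :
    (a+1)*a + (b+1)*b ≤ (a+b+1)*(a+b) ∧
    ((a+1)*a + (b+1)*b = (a+b+1)*(a+b) ↔ a = 0 ∨ b = 0) := by
  have h : (a+b+1)*(a+b) = (a+1)*a + (b+1)*b + 2*(a*b) := by ring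
  rw [h]
  constructor
  · exact Nat.le_add_right _ _
  · constructor
    · intro he
      have : 2 * (a * b) = 0 := by omega
      have : a * b = 0 := by omega
      rcases Nat.mul_eq_zero.mp this with h | h
      · exact Or.inl h
      · exact Or.inr h
    · rintro (rfl | rfl) <;> simp

lemma Dr_one_apply {n : ℕ} (x : Fin n) : Dr n 2 1 1 x = 1 := by
  rw [Dr, if_neg]
  rintro ⟨h1, h2⟩
  have : ((1 : Fin 2) : ℕ) = 1 := rfl
  omega

lemma Dr_zero_apply {n : ℕ} (x : Fin n) :
    Dr n 2 1 0 x = if (x : ℕ) = 0 then -1 else 1 := by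
  rw [Dr]
  have : ((0 : Fin 2) : ℕ) = 0 := rfl
  by_cases h : (x : ℕ) = 0 <;> simp [this, h]

lemma Dr_entries {n : ℕ} (i : Fin 2) (j : Fin n) : Dr n 2 1 i j = 1 ∨ Dr n 2 1 i j = -1 := by
  rw [Dr]
  split <;> simp

lemma rectequiv_of_pattern {n : ℕ} (hn : 2 < n) (A : Matrix (Fin 2) (Fin n) ℚ)
    (hA : ∀ i j, A i j = 1 ∨ A i j = -1) (c : ℚ) (hc : c = 1 ∨ c = -1) (j₀ : Fin n)
    (hp : ∀ j, A 0 j * A 1 j = if j = j₀ then c else -c) :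
    RectEquiv A (Dr n 2 1) := by
  haveI : NeZero n := ⟨by omega⟩
  refine ⟨1, Equiv.swap j₀ 0, ![-c, 1], fun j => A 1 j, ?_, fun j => hA 1 j, ?_⟩
  · intro i
    fin_cases i
    · rcases hc with rfl | rfl <;> simp
    · simp
  · intro i j
    have hswap : ∀ j : Fin n, (Equiv.swap j₀ 0 j = 0 ↔ j = j₀) := by
      intro j
      constructor
      · intro h
        have := congrArg (Equiv.swap j₀ 0) h
        rwa [Equiv.swap_apply_self, Equiv.swap_apply_right] at this
      · rintro rfl
        exact Equiv.swap_apply_left _ _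
    have hA1sq : A 1 j * A 1 j = 1 := by
      rcases hA 1 j with h | h <;> rw [h] <;> norm_num
    have hA0 : A 0 j = (if j = j₀ then c else -c) * A 1 j := by
      have := hp j
      have h2 : A 0 j * A 1 j * A 1 j = (if j = j₀ then c else -c) * A 1 j := by rw [this]
      rwa [mul_assoc, hA1sq, mul_one] at h2
    fin_cases i
    · show A 0 j = ![-c, 1] 0 * A 1 j * Dr n 2 1 (0 : Fin 2) (Equiv.swap j₀ 0 j)
      rw [Dr_zero_apply, hA0]
      have hval : ((Equiv.swap j₀ 0 j : Fin n) : ℕ) = 0 ↔ j = j₀ := by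
        rw [← hswap j, Fin.ext_iff, Fin.val_zero]
      by_cases h : j = j₀
      · rw [if_pos h, if_pos (hval.mpr h)]
        show c * A 1 j = -c * A 1 j * -1
        ring
      · rw [if_neg h, if_neg (fun hh => h (hval.mp hh))]
        show -c * A 1 j = -c * A 1 j * 1
        ring
    · show A 1 j = ![-c, 1] 1 * A 1 j * Dr n 2 1 (1 : Fin 2) (Equiv.swap j₀ 0 j)
      rw [Dr_one_apply]
      show A 1 j = 1 * A 1 j * 1
      ring

theorem mper_bound_two_rows (n : ℕ) (hn : 2 < n)
    (A : Matrix (Fin 2) (Fin n) ℚ) (hA : ∀ i j, A i j = 1 ∨ A i j = -1)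
    (hrk : A.rank = 2) :
    mper A ≤ mper (Dr n 2 1) ∧
      (mper A = mper (Dr n 2 1) ↔ RectEquiv A (Dr n 2 1)) := by
  classical
  haveI : NeZero n := ⟨by omega⟩
  have hval0 : ∀ x : Fin n, ((x : ℕ) = 0) ↔ x = 0 := fun x => by
    rw [Fin.ext_iff, Fin.val_zero]
  set P := (Finset.univ.filter fun j => A 0 j * A 1 j = 1) with hPdef
  set m := P.card with hm
  set k := Pᶜ.card with hk
  have hmk : m + k = n := by
    rw [hm, hk, Finset.card_add_card_compl, Fintype.card_fin]
  have hp : ∀ j, A 0 j * A 1 j = 1 ∨ A 0 j * A 1 j = -1 := by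
    intro j
    rcases hA 0 j with h | h <;> rcases hA 1 j with h' | h' <;> simp [h, h']
  have hA1sq : ∀ j, A 1 j * A 1 j = 1 := by
    intro j; rcases hA 1 j with h | h <;> rw [h] <;> norm_num
  have hrow : ∀ (c : ℚ) j, A 0 j * A 1 j = c → A 0 j = c * A 1 j := by
    intro c j hcj
    have h2 : A 0 j * A 1 j * A 1 j = c * A 1 j := by rw [hcj]
    rwa [mul_assoc, hA1sq, mul_one] at h2
  have hmemP : ∀ j, j ∈ P ↔ A 0 j * A 1 j = 1 := by
    intro j; simp [hPdef]
  have hmemPc : ∀ j, j ∈ Pᶜ ↔ A 0 j * A 1 j = -1 := by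
    intro j
    rw [Finset.mem_compl, hmemP]
    rcases hp j with h | h <;> simp [h] <;> norm_num
  have hm1 : 1 ≤ m := by
    by_contra hcon
    have hP0 : P = ∅ := Finset.card_eq_zero.mp (by omega)
    have hall : ∀ j, A 0 j = -1 * A 1 j := by
      intro j
      refine hrow _ _ ?_
      have : j ∉ P := by rw [hP0]; exact Finset.notMem_empty _
      rcases hp j with h | h
      · exact absurd ((hmemP j).mpr h) this
      · exact h
    have := rank_le_one_of_row_mul A (-1) (by norm_num) hall
    omega
  have hk1 : 1 ≤ k := by
    by_contra hcon
    have hP0 : Pᶜ = ∅ := Finset.card_eq_zero.mp (by omega)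
    have hall : ∀ j, A 0 j = 1 * A 1 j := by
      intro j
      refine hrow _ _ ?_
      have hj : j ∉ Pᶜ := by rw [hP0]; exact Finset.notMem_empty _
      rcases hp j with h | h
      · exact h
      · exact absurd ((hmemPc j).mpr h) hj
    have := rank_le_one_of_row_mul A 1 (by norm_num) hall
    omega
  obtain ⟨a, ham⟩ : ∃ a, m = a + 1 := ⟨m - 1, by omega⟩
  obtain ⟨b, hbk⟩ : ∃ b, k = b + 1 := ⟨k - 1, by omega⟩
  have hAval : mper A = (((a+1)*a + (b+1)*b : ℕ) : ℚ) := by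
    rw [mper_formula A hA]
    congr 1
    rw [← hPdef, ← hm, ← hk, ham, hbk]
    simp
  have hDval : mper (Dr n 2 1) = (((a+b+1)*(a+b) : ℕ) : ℚ) := by
    rw [mper_formula _ (fun i j => Dr_entries i j)]
    have hPD : (Finset.univ.filter fun j => Dr n 2 1 0 j * Dr n 2 1 1 j = 1) =
        Finset.univ.erase (0 : Fin n) := by
      ext j
      rw [Finset.mem_filter, Finset.mem_erase, Dr_zero_apply, Dr_one_apply, mul_one]
      constructor
      · rintro ⟨-, hcond⟩
        refine ⟨?_, Finset.mem_univ _⟩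
        intro hj0
        rw [if_pos ((hval0 j).mpr hj0)] at hcond
        norm_num at hcond
      · rintro ⟨hj0, -⟩
        refine ⟨Finset.mem_univ _, ?_⟩
        rw [if_neg (fun hh => hj0 ((hval0 j).mp hh))]
    rw [hPD]
    have hce : (Finset.univ.erase (0 : Fin n)).card = n - 1 := by
      rw [Finset.card_erase_of_mem (Finset.mem_univ _), Finset.card_univ, Fintype.card_fin]
    have hcc : (Finset.univ.erase (0 : Fin n))ᶜ.card = 1 := by
      rw [Finset.card_compl, Fintype.card_fin, hce]
      omega
    rw [hce, hcc]
    congr 1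
    have hn' : n = a + b + 2 := by omega
    subst hn'
    simp
  constructor
  · rw [hAval, hDval]
    exact_mod_cast (nat_key a b).1
  constructor
  · intro heq
    rw [hAval, hDval] at heq
    have heqn : (a+1)*a + (b+1)*b = (a+b+1)*(a+b) := by exact_mod_cast heq
    rcases (nat_key a b).2.mp heqn with h0 | h0
    · -- a = 0 : m = 1, P = {j₀}, c = 1
      have hm' : m = 1 := by omega
      obtain ⟨j₀, hj₀⟩ := Finset.card_eq_one.mp hm'
      apply rectequiv_of_pattern hn A hA 1 (Or.inl rfl) j₀
      intro j
      by_cases hj : j = j₀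
      · subst hj
        rw [if_pos rfl]
        exact (hmemP j).mp (hj₀ ▸ Finset.mem_singleton_self j)
      · rw [if_neg hj]
        have hjn : j ∉ P := by rw [hj₀]; simp [hj]
        rcases hp j with h | h
        · exact absurd ((hmemP j).mpr h) hjn
        · rw [h]
    · -- b = 0 : k = 1, Pᶜ = {j₀}, c = -1
      have hk' : k = 1 := by omega
      obtain ⟨j₀, hj₀⟩ := Finset.card_eq_one.mp hk'
      apply rectequiv_of_pattern hn A hA (-1) (Or.inr rfl) j₀
      intro j
      by_cases hj : j = j₀
      · subst hj
        rw [if_pos rfl]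
        exact (hmemPc j).mp (hj₀ ▸ Finset.mem_singleton_self j)
      · rw [if_neg hj]
        have hjn : j ∉ Pᶜ := by rw [hj₀]; simp [hj]
        rcases hp j with h | h
        · rw [h]; norm_num
        · exact absurd ((hmemPc j).mpr h) hjn
  · intro hre
    obtain ⟨ρ, σ, ε, δ, hε, hδ, h⟩ := hre
    have hδ2 : ∀ j, δ j * δ j = 1 := by
      intro j; rcases hδ j with hh | hh <;> rw [hh] <;> norm_num
    have hprod : ∀ j, A 0 j * A 1 j =
        (ε 0 * ε 1) * (if ((σ j : Fin n) : ℕ) = 0 then -1 else 1) := by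
      intro j
      rw [h 0 j, h 1 j]
      have hDρ : Dr n 2 1 (ρ 0) (σ j) * Dr n 2 1 (ρ 1) (σ j) = Dr n 2 1 0 (σ j) := by
        rcases perm_fin_two ρ with ⟨h0, h1⟩ | ⟨h0, h1⟩ <;> rw [h0, h1]
        · rw [Dr_one_apply, mul_one]
        · rw [Dr_one_apply, one_mul]
      have hr : (ε 0 * δ j * Dr n 2 1 (ρ 0) (σ j)) * (ε 1 * δ j * Dr n 2 1 (ρ 1) (σ j))
          = (ε 0 * ε 1) * (δ j * δ j) * (Dr n 2 1 (ρ 0) (σ j) * Dr n 2 1 (ρ 1) (σ j)) := by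
        ring
      rw [hr, hδ2, mul_one, hDρ, Dr_zero_apply]
    have hsig : ∀ j, (((σ j : Fin n) : ℕ) = 0) ↔ j = σ.symm 0 := by
      intro j
      rw [hval0, ← Equiv.eq_symm_apply]
    have he : ε 0 * ε 1 = 1 ∨ ε 0 * ε 1 = -1 := by
      rcases hε 0 with h0 | h0 <;> rcases hε 1 with h1 | h1 <;> rw [h0, h1] <;> norm_num
    have hab : a = 0 ∨ b = 0 := by
      rcases he with he1 | he1
      · have hPA : P = Finset.univ.erase (σ.symm 0) := by
          ext j
          rw [hmemP, hprod, he1, one_mul, Finset.mem_erase]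
          constructor
          · intro hcond
            refine ⟨?_, Finset.mem_univ _⟩
            intro hj0
            rw [if_pos ((hsig j).mpr hj0)] at hcond
            norm_num at hcond
          · rintro ⟨hj0, -⟩
            rw [if_neg (fun hh => hj0 ((hsig j).mp hh))]
        have : m = n - 1 := by
          rw [hm, hPA, Finset.card_erase_of_mem (Finset.mem_univ _), Finset.card_univ,
            Fintype.card_fin]
        right; omega
      · have hPA : P = {σ.symm 0} := by
          ext j
          rw [hmemP, hprod, he1, Finset.mem_singleton]
          constructor
          · intro hcond
            by_contra hj0
            rw [if_neg (fun hh => hj0 ((hsig j).mp hh))] at hcond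
            norm_num at hcond
          · intro hj0
            rw [if_pos ((hsig j).mpr hj0)]
            norm_num
        have : m = 1 := by rw [hm, hPA, Finset.card_singleton]
        left; omega
    rw [hAval, hDval]
    exact_mod_cast (nat_key a b).2.mpr hab
end

section
/- For all integers 0 ≤ l < k, the rank over ℚ of the k×k matrix D_{(k,l)} equals l+1. -/
open Matrix

/-!
`D_{(k,l)} = J + diagonal d`, where `J` is the all-ones matrix and `d` is `-2` on the first `l`
indices and `0` elsewhere. Since `d l = 0`, subtracting row `l` from every other row and then
column `l` from every other column is a congruence `P (J + diagonal d) Pᵀ` by a unimodular `P`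
that sends `J` to `eₗ eₗᵀ` and fixes `diagonal d`. The result is `diagonal (d + eₗ)`, with
`l + 1` nonzero entries.
-/

namespace Matrix

variable {n : Type*} [Fintype n]

section CommRing

variable {R : Type*} [CommRing R]

lemma isUnit_det_one_add_vecMulVec [DecidableEq n] {u v : n → R} (h : v ⬝ᵥ u = 0) :
    IsUnit (1 + vecMulVec u v).det := by
  rw [vecMulVec_eq Unit, det_one_add_replicateCol_mul_replicateRow, h, add_zero]
  exact isUnit_one

lemma mul_vecMulVec_mul_transpose (P : Matrix n n R) (v : n → R) :
    P * vecMulVec v v * Pᵀ = vecMulVec (P *ᵥ v) (P *ᵥ v) := by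
  rw [mul_vecMulVec, vecMulVec_mul, vecMul_transpose]

end CommRing

variable [DecidableEq n] {K : Type*} [Field K] [DecidableEq K]

lemma card_ne_zero_add_single {d : n → K} {l : n} (hl : d l = 0) :
    Fintype.card {i // (d + Pi.single l 1 : n → K) i ≠ 0} = Fintype.card {i // d i ≠ 0} + 1 := by
  have hfilter : Finset.univ.filter (fun i => (d + Pi.single l 1 : n → K) i ≠ 0)
      = insert l (Finset.univ.filter (fun i => d i ≠ 0)) := by
    ext i
    by_cases hi : i = l
    · subst hi; simp [hl]
    · simp [hi]
  rw [Fintype.card_subtype, Fintype.card_subtype, hfilter,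
    Finset.card_insert_of_notMem (by simp [hl])]

theorem rank_vecMulVec_one_one_add_diagonal (d : n → K) {l : n} (hl : d l = 0) :
    (vecMulVec 1 1 + diagonal d).rank = Fintype.card {i // d i ≠ 0} + 1 := by
  set e : n → K := Pi.single l 1
  set P : Matrix n n K := 1 + vecMulVec (e - 1) e
  have hP : IsUnit P.det := isUnit_det_one_add_vecMulVec (by simp [e, dotProduct_sub])
  have hP_one : P *ᵥ 1 = e := by
    simp [P, add_mulVec, vecMulVec_mulVec, e]
  have hP_diag : P * diagonal d = diagonal d := by
    have he_diag : e ᵥ* diagonal d = 0 := by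
      ext i
      by_cases hi : i = l
      · simp [e, vecMul_diagonal, hi, hl]
      · simp [e, vecMul_diagonal, hi]
    rw [add_mul, one_mul, vecMulVec_mul, he_diag, vecMulVec_zero, add_zero]
  have hdiag_P : diagonal d * Pᵀ = diagonal d := by
    simpa [transpose_mul] using congrArg transpose hP_diag
  have hconj : P * (vecMulVec 1 1 + diagonal d) * Pᵀ = diagonal (d + e) := by
    rw [mul_add, add_mul, mul_vecMulVec_mul_transpose, hP_one, hP_diag, hdiag_P, add_comm,
      ← single_eq_single_vecMulVec_single, ← diagonal_single, diagonal_add]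
    rfl
  rw [← rank_mul_eq_right_of_isUnit_det P _ hP,
    ← rank_mul_eq_left_of_isUnit_det Pᵀ _ (by rwa [det_transpose]),
    hconj, rank_diagonal, card_ne_zero_add_single hl]

end Matrix

theorem rank_Dmat (k l : ℕ) (h : l < k) : (Dmat k l).rank = l + 1 := by
  have hD : Dmat k l =
      vecMulVec (1 : Fin k → ℚ) 1 + diagonal (fun i : Fin k => if (i : ℕ) < l then -2 else 0) := by
    ext i j
    simp only [Dmat, Matrix.add_apply, vecMulVec_apply, diagonal_apply, Pi.one_apply, Fin.ext_iff]
    split_ifs <;> first | omega | norm_num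
  rw [hD, rank_vecMulVec_one_one_add_diagonal _ (l := ⟨l, h⟩) (by simp), Fintype.card_subtype]
  simp [Fin.card_filter_val_lt, h.le]
end

section
/- Let 0 ≤ l < k, let D = D_{(k,l)}, and let b be the all-ones column vector of length k. For i = 1,…,k let C_i denote the k×k matrix obtained from D by replacing its i-th column with b. Then rank D = l+1 over ℚ; rank C_i = l for every i ∈ {1,…,l}; and rank C_i = l+1 for every i ∈ {l+1,…,k}. In particular, exactly l of the matrices C_1,…,C_k have rank l and all the others have rank l+1. -/
/-!
Column `j` of `D_{(n,l)}` is the all-ones vector `𝟙` if `j ≥ l` and `𝟙 - 2 eⱼ` if `j < l`.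
Whenever some column equals `𝟙`, the column space is therefore spanned by `𝟙` and the `eⱼ`
with `j < l`, and these are linearly independent because they all vanish at a coordinate
where `𝟙` does not; so the rank is `l + 1`. Replacing column `i` by `𝟙` just turns `D_{(n,l)}`
into the same kind of matrix with `i` removed from the set of negated diagonal entries.
-/

open Matrix

open Submodule Set Finset

namespace Matrix

variable {ι K : Type*} [DecidableEq ι] [Field K]

def onesNegDiag (S : Finset ι) : Matrix ι ι K :=
  of fun i j => if j ∈ S ∧ i = j then -1 else 1

def onesAndSingles (S : Finset ι) : Option S → ι → K :=
  fun o => Option.casesOn' o 1 fun j => Pi.single (j : ι) 1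

variable {S : Finset ι} {i₀ : ι}

lemma col_onesNegDiag_of_mem {j : ι} (hj : j ∈ S) :
    (onesNegDiag S : Matrix ι ι K).col j = 1 - (2 : K) • Pi.single j 1 := by
  ext i
  by_cases hij : i = j
  · subst hij; simp [onesNegDiag, hj]; norm_num
  · simp [onesNegDiag, hij]

lemma col_onesNegDiag_of_notMem {j : ι} (hj : j ∉ S) :
    (onesNegDiag S : Matrix ι ι K).col j = 1 := by
  ext i
  simp [onesNegDiag, hj]

lemma span_cols_onesNegDiag (h2 : (2 : K) ≠ 0) (hi₀ : i₀ ∉ S) :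
    span K (range (onesNegDiag S : Matrix ι ι K).col) = span K (range (onesAndSingles S)) := by
  apply le_antisymm <;> rw [span_le]
  · rintro _ ⟨j, rfl⟩
    by_cases hj : j ∈ S
    · rw [col_onesNegDiag_of_mem hj]
      exact sub_mem (subset_span ⟨none, rfl⟩) (smul_mem _ _ (subset_span ⟨some ⟨j, hj⟩, rfl⟩))
    · rw [col_onesNegDiag_of_notMem hj]
      exact subset_span ⟨none, rfl⟩
  · have hones : (1 : ι → K) ∈ span K (range (onesNegDiag S).col) := by
      rw [← col_onesNegDiag_of_notMem hi₀]
      exact subset_span ⟨i₀, rfl⟩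
    rintro _ ⟨_ | j, rfl⟩
    · exact hones
    · have hsingle : Pi.single (j : ι) (1 : K) = (2 : K)⁻¹ • (1 - (onesNegDiag S).col j) := by
        rw [col_onesNegDiag_of_mem j.2, sub_sub_cancel, inv_smul_smul₀ h2]
      simp only [onesAndSingles, Option.casesOn'_some, hsingle]
      exact smul_mem _ _ (sub_mem hones (subset_span ⟨j, rfl⟩))

lemma linearIndependent_onesAndSingles (hi₀ : i₀ ∉ S) :
    LinearIndependent K (onesAndSingles S : Option S → ι → K) := by
  refine linearIndependent_option'.2 ⟨?_, fun hmem => ?_⟩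
  · exact (Pi.linearIndependent_single_one ι K).comp ((↑) : S → ι) Subtype.val_injective
  · have hle : span K (range fun j : S => (Pi.single (j : ι) (1 : K) : ι → K)) ≤
        LinearMap.ker (LinearMap.proj i₀) :=
      span_le.2 fun _ ⟨j, hj⟩ => hj ▸ Pi.single_eq_of_ne (fun h : i₀ = j => hi₀ (h ▸ j.2)) _
    simpa using hle hmem

theorem rank_onesNegDiag [Fintype ι] (h2 : (2 : K) ≠ 0) (hi₀ : i₀ ∉ S) :
    (onesNegDiag S : Matrix ι ι K).rank = #S + 1 := by
  rw [rank_eq_finrank_span_cols, span_cols_onesNegDiag h2 hi₀,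
    finrank_span_eq_card (linearIndependent_onesAndSingles hi₀)]
  simp

lemma updateCol_onesNegDiag (j : ι) :
    (onesNegDiag S : Matrix ι ι K).updateCol j (fun _ => 1) = onesNegDiag (S.erase j) := by
  ext i j'
  by_cases h : j' = j <;> simp [onesNegDiag, h]

end Matrix

lemma Dmat_eq_onesNegDiag (n l : ℕ) : Dmat n l = onesNegDiag {j : Fin n | j < l} := by
  ext i j
  simp [Dmat, onesNegDiag, Fin.ext_iff, and_comm]

theorem rank_Dmat_replace_column (k l : ℕ) (h : l < k) :
    (Dmat k l).rank = l + 1 ∧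
      (∀ i : Fin k, (i : ℕ) < l →
        ((Dmat k l).updateCol i (fun _ => 1)).rank = l) ∧
      (∀ i : Fin k, l ≤ (i : ℕ) →
        ((Dmat k l).updateCol i (fun _ => 1)).rank = l + 1) := by
  set S : Finset (Fin k) := {j | j < l}
  have hcard : #S = l := by simp [S, Fin.card_filter_val_lt, h.le]
  have hl : (⟨l, h⟩ : Fin k) ∉ S := by simp [S]
  have h2 : (2 : ℚ) ≠ 0 := two_ne_zero
  simp only [Dmat_eq_onesNegDiag, updateCol_onesNegDiag]
  refine ⟨by rw [rank_onesNegDiag h2 hl, hcard], fun i hi => ?_, fun i hi => ?_⟩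
  · rw [rank_onesNegDiag h2 (fun hm => hl (mem_of_mem_erase hm)),
      card_erase_of_mem (by simpa [S] using hi), hcard]
    omega
  · rw [erase_eq_of_notMem (by simpa [S] using hi), rank_onesNegDiag h2 hl, hcard]
end

section
/- Let C be a k×k (−1,1)-matrix of rank m ≥ 1 over ℚ and let b be a column vector of length k with entries in {−1,1}. For i = 1,…,k let C_i denote the matrix obtained from C by replacing its i-th column with b. Then: (1) if b lies in the ℚ-linear span of the columns of C, and l denotes the smallest cardinality of a set of columns of C whose span contains b (so l ≤ m), then for every i one has rank C_i ∈ {m−1, m}, and the number of indices i with rank C_i = m−1 is at most m−l; (2) if b does not lie in the span of the columns of C, then for every i one has rank C_i ∈ {m, m+1}. -/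
/-!
Write `W i` for the span of the columns of `C` other than the `i`-th. Then
`rank C_i = dim (W i + ℚ b)` and `dim W i ∈ {m - 1, m}`, which gives both rank ranges.
The rank drops to `m - 1` exactly when `b ∈ W i` while column `i ∉ W i`. If `S` is a smallest
set of columns spanning `b`, its columns are independent, and by the exchange lemma no such `i`
lies in `S`; since such a column is outside the span of all the others, adding these columns to
`S` keeps it independent, so `l + #{i | rank C_i = m - 1} ≤ m`.
-/

open Matrix Submodule Module Set

section SpanInsert

variable {K V : Type*} [Field K] [AddCommGroup V] [Module K V] [FiniteDimensional K V]

theorem finrank_span_insert_le (x : V) (s : Set V) :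
    finrank K (span K (insert x s)) ≤ finrank K (span K s) + 1 := by
  rw [span_insert]
  have hx : finrank K (K ∙ x) ≤ 1 := (finrank_span_le_card {x}).trans (by simp)
  have := finrank_add_le_finrank_add_finrank (K ∙ x) (span K s)
  omega

theorem finrank_span_insert_of_notMem {x : V} {s : Set V} (hx : x ∉ span K s) :
    finrank K (span K (insert x s)) = finrank K (span K s) + 1 := by
  rw [span_insert, sup_comm, finrank_sup_span_singleton hx]

end SpanInsert

section ReplaceVector

variable {K V ι : Type*} [Field K] [AddCommGroup V] [Module K V] [FiniteDimensional K V]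
  (f : ι → V) {b : V}

theorem finrank_span_range_le_finrank_span_image_compl_add_one (i : ι) :
    finrank K (span K (range f)) ≤ finrank K (span K (f '' {i}ᶜ)) + 1 := by
  rw [← insert_image_compl_eq_range f i]
  exact finrank_span_insert_le _ _

theorem finrank_span_insert_image_compl_of_mem_span (hb : b ∈ span K (range f)) (i : ι) :
    finrank K (span K (insert b (f '' {i}ᶜ))) = finrank K (span K (range f)) - 1 ∨
      finrank K (span K (insert b (f '' {i}ᶜ))) = finrank K (span K (range f)) := by
  have hlow := finrank_span_range_le_finrank_span_image_compl_add_one (K := K) f i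
  have hmono : finrank K (span K (f '' {i}ᶜ)) ≤ finrank K (span K (insert b (f '' {i}ᶜ))) :=
    finrank_mono (span_mono (subset_insert _ _))
  have hup : finrank K (span K (insert b (f '' {i}ᶜ))) ≤ finrank K (span K (range f)) :=
    finrank_mono (span_le.2 (insert_subset hb ((image_subset_range f _).trans subset_span)))
  omega

theorem finrank_span_insert_image_compl_of_notMem_span (hb : b ∉ span K (range f)) (i : ι) :
    finrank K (span K (insert b (f '' {i}ᶜ))) = finrank K (span K (range f)) ∨
      finrank K (span K (insert b (f '' {i}ᶜ))) = finrank K (span K (range f)) + 1 := by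
  have hle : span K (f '' {i}ᶜ) ≤ span K (range f) := span_mono (image_subset_range f _)
  have hlow := finrank_span_range_le_finrank_span_image_compl_add_one (K := K) f i
  have hup := finrank_mono hle
  rw [finrank_span_insert_of_notMem fun h => hb (hle h)]
  omega

theorem mem_span_image_compl_and_notMem_of_finrank_span_insert_eq_pred {i : ι}
    (hpos : 0 < finrank K (span K (range f)))
    (h : finrank K (span K (insert b (f '' {i}ᶜ))) = finrank K (span K (range f)) - 1) :
    b ∈ span K (f '' {i}ᶜ) ∧ f i ∉ span K (f '' {i}ᶜ) := by
  have hlow := finrank_span_range_le_finrank_span_image_compl_add_one (K := K) f i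
  have hle : span K (f '' {i}ᶜ) ≤ span K (insert b (f '' {i}ᶜ)) :=
    span_mono (subset_insert _ _)
  have heq := eq_of_le_of_finrank_le hle (by omega)
  refine ⟨heq ▸ subset_span (mem_insert _ _), fun hfi => ?_⟩
  rw [← heq, ← insert_image_compl_eq_range f i, span_insert_eq_span hfi] at h
  rw [← insert_image_compl_eq_range f i, span_insert_eq_span hfi] at hpos
  omega

end ReplaceVector

section MinimalSpanningSet

variable {K V ι : Type*} [Field K] [AddCommGroup V] [Module K V] [DecidableEq ι]
  {f : ι → V} {b : V} {S : Finset ι}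

theorem notMem_span_image_erase_of_minimal
    (hmin : ∀ S' : Finset ι, b ∈ span K (f '' S') → S.card ≤ S'.card) {j : ι}
    (hj : j ∈ S) : b ∉ span K (f '' ↑(S.erase j)) := fun h => by
  have := hmin _ h
  rw [Finset.card_erase_of_mem hj] at this
  have := Finset.card_pos.2 ⟨j, hj⟩
  omega

theorem span_image_eq_span_image_erase {j : ι} (hj : j ∈ S)
    (hfj : f j ∈ span K (f '' ↑(S.erase j))) :
    span K (f '' S) = span K (f '' ↑(S.erase j)) := by
  nth_rw 1 [← Finset.insert_erase hj]
  rw [Finset.coe_insert, image_insert_eq, span_insert_eq_span hfj]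

theorem linearIndepOn_of_minimal (hbS : b ∈ span K (f '' S))
    (hmin : ∀ S' : Finset ι, b ∈ span K (f '' S') → S.card ≤ S'.card) :
    LinearIndepOn K f (S : Set ι) := by
  refine linearIndepOn_iff_notMem_span.2 fun j hj hfj => ?_
  rw [← Finset.coe_erase] at hfj
  exact notMem_span_image_erase_of_minimal hmin hj (span_image_eq_span_image_erase hj hfj ▸ hbS)

theorem mem_span_image_compl_of_minimal (hbS : b ∈ span K (f '' S))
    (hmin : ∀ S' : Finset ι, b ∈ span K (f '' S') → S.card ≤ S'.card) {i : ι}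
    (hi : i ∈ S) (hb : b ∈ span K (f '' {i}ᶜ)) : f i ∈ span K (f '' {i}ᶜ) := by
  rw [← Finset.insert_erase hi, Finset.coe_insert, image_insert_eq] at hbS
  have hexch := mem_span_insert_exchange hbS (notMem_span_image_erase_of_minimal hmin hi)
  refine span_le.2 (insert_subset hb ?_) hexch
  refine (image_mono ?_).trans subset_span
  simp

end MinimalSpanningSet

section Counting

variable {K V ι : Type*} [Field K] [AddCommGroup V] [Module K V] {f : ι → V}

theorem LinearIndepOn.union_finset_of_notMem_span_image_compl {s : Set ι}
    (hs : LinearIndepOn K f s) (T : Finset ι) (hT : ∀ i ∈ T, f i ∉ span K (f '' {i}ᶜ)) :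
    LinearIndepOn K f (s ∪ T) := by
  classical
  induction T using Finset.induction_on with
  | empty => simpa using hs
  | insert i T _ ih =>
    rw [Finset.coe_insert, union_insert]
    have hind := ih fun j hj => hT j (Finset.mem_insert_of_mem hj)
    by_cases hi : i ∈ s ∪ T
    · rwa [insert_eq_of_mem hi]
    · refine hind.insert fun h => hT i (Finset.mem_insert_self i T) (span_mono ?_ h)
      exact image_mono fun j hj hji => hi (hji ▸ hj)

theorem LinearIndepOn.finset_card_le_finrank_span_range [FiniteDimensional K V] {U : Finset ι}
    (hU : LinearIndepOn K f U) : U.card ≤ finrank K (span K (range f)) := by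
  have := finrank_span_eq_card (R := K) hU
  simp only [Finset.coe_sort_coe, Fintype.card_coe] at this
  exact this ▸ finrank_mono (span_mono (range_subset_iff.2 fun j => mem_range_self _))

theorem card_add_card_le_finrank_span_range_of_minimal [FiniteDimensional K V] {b : V}
    {S T : Finset ι} (hbS : b ∈ span K (f '' S))
    (hmin : ∀ S' : Finset ι, b ∈ span K (f '' S') → S.card ≤ S'.card)
    (hT : ∀ i ∈ T, b ∈ span K (f '' {i}ᶜ) ∧ f i ∉ span K (f '' {i}ᶜ)) :
    S.card + T.card ≤ finrank K (span K (range f)) := by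
  classical
  have hdisj : Disjoint S T := Finset.disjoint_left.2 fun i hiS hiT =>
    (hT i hiT).2 (mem_span_image_compl_of_minimal hbS hmin hiS (hT i hiT).1)
  have hind : LinearIndepOn K f ↑(S ∪ T) := by
    rw [Finset.coe_union]
    exact (linearIndepOn_of_minimal hbS hmin).union_finset_of_notMem_span_image_compl T
      fun i hi => (hT i hi).2
  rw [← Finset.card_union_of_disjoint hdisj]
  exact hind.finset_card_le_finrank_span_range

end Counting

theorem Matrix.rank_updateCol {m n R : Type*} [CommRing R] [Fintype m] [Fintype n] [DecidableEq n]
    (A : Matrix m n R) (j : n) (b : m → R) :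
    (A.updateCol j b).rank = finrank R (span R (insert b (A.col '' {j}ᶜ))) := by
  have hcol : (A.updateCol j b).col = Function.update A.col j b := by
    ext j' i
    by_cases h : j' = j <;> simp [h]
  have hcompl : EqOn (Function.update A.col j b) A.col {j}ᶜ := fun j' hj' =>
    Function.update_of_ne hj' b A.col
  rw [rank_eq_finrank_span_cols, hcol, ← insert_image_compl_eq_range _ j, Function.update_self,
    hcompl.image_eq]

open scoped Classical in
theorem rank_replace_column_general (k m : ℕ) (C : Matrix (Fin k) (Fin k) ℚ)
    (hrk : C.rank = m) (hm : 1 ≤ m)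
    (b : Fin k → ℚ) :
    (∀ l : ℕ,
      IsLeast {c : ℕ | ∃ S : Finset (Fin k), S.card = c ∧
        b ∈ Submodule.span ℚ ((fun j i => C i j) '' ↑S)} l →
      (∀ i : Fin k, (C.updateCol i b).rank = m - 1 ∨ (C.updateCol i b).rank = m) ∧
        (Finset.univ.filter
          (fun i : Fin k => (C.updateCol i b).rank = m - 1)).card ≤ m - l) ∧
    (b ∉ Submodule.span ℚ (Set.range (fun j i => C i j)) →
      ∀ i : Fin k, (C.updateCol i b).rank = m ∨ (C.updateCol i b).rank = m + 1) := by
  set f : Fin k → Fin k → ℚ := fun j i => C i j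
  have hV : finrank ℚ (span ℚ (range f)) = m := by rw [← hrk, rank_eq_finrank_span_cols]; rfl
  simp only [Matrix.rank_updateCol, ← hV]
  refine ⟨fun l ⟨⟨S, hSl, hbS⟩, hmin⟩ => ⟨?_, ?_⟩, ?_⟩
  · exact finrank_span_insert_image_compl_of_mem_span _ (span_mono (image_subset_range _ _) hbS)
  · refine Nat.le_sub_of_add_le' (hSl ▸ card_add_card_le_finrank_span_range_of_minimal hbS
      (fun S' hS' => hSl ▸ hmin ⟨S', rfl, hS'⟩) fun i hi => ?_)
    exact mem_span_image_compl_and_notMem_of_finrank_span_insert_eq_pred _ (hV ▸ hm)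
      (Finset.mem_filter.1 hi).2
  · exact fun hb => finrank_span_insert_image_compl_of_notMem_span _ hb

open scoped Classical in
theorem rank_replace_column (k m : ℕ) (C : Matrix (Fin k) (Fin k) ℚ)
    (hC : ∀ i j, C i j = 1 ∨ C i j = -1) (hrk : C.rank = m) (hm : 1 ≤ m)
    (b : Fin k → ℚ) (hb : ∀ i, b i = 1 ∨ b i = -1) :
    (∀ l : ℕ,
      IsLeast {c : ℕ | ∃ S : Finset (Fin k), S.card = c ∧
        b ∈ Submodule.span ℚ ((fun j i => C i j) '' ↑S)} l →
      (∀ i : Fin k, (C.updateCol i b).rank = m - 1 ∨ (C.updateCol i b).rank = m) ∧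
        (Finset.univ.filter
          (fun i : Fin k => (C.updateCol i b).rank = m - 1)).card ≤ m - l) ∧
    (b ∉ Submodule.span ℚ (Set.range (fun j i => C i j)) →
      ∀ i : Fin k, (C.updateCol i b).rank = m ∨ (C.updateCol i b).rank = m + 1) :=
  rank_replace_column_general k m C hrk hm b
end
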